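/- Let G be a finite group and U ≤ G a strongly self-centralizing subgroup (i.e., C_G(x) = U for every nonidentity x ∈ U). Then for every nonidentity x ∈ U, the nilpotentizer nil_G(x) = {g ∈ G : ⟨g,x⟩ is nilpotent} equals U. -/

import Mathlib

def nilpotentizer (G : Type*) [Group G] : Set G :=
  {g | ∀ h : G, Group.IsNilpotent (Subgroup.closure ({g, h} : Set G))}

def nilpotentizerOf {G : Type*} [Group G] (x : G) : Set G :=
  {g | Group.IsNilpotent (Subgroup.closure ({g, x} : Set G))}

def nilpotentGraph (G : Type*) [Group G] :
    SimpleGraph {x : G // x ∉ nilpotentizer G} where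
  Adj a b := a ≠ b ∧ Group.IsNilpotent (Subgroup.closure ({(a : G), (b : G)} : Set G))
  symm := ⟨fun a b ⟨hne, h⟩ => ⟨fun e => hne e.symm, by rwa [Set.pair_comm]⟩⟩
  loopless := ⟨fun a ⟨h, _⟩ => h rfl⟩

noncomputable def hypercenter (G : Type*) [Group G] : Subgroup G := upperCentralSeries G (Nat.card G)

instance {G : Type*} [Group G] : (hypercenter G).Normal := by
  unfold hypercenter; exact (inferInstance : (Subgroup.upperCentralSeries G (Nat.card G)).Normal)

/-!
A nontrivial nilpotent group has a nontrivial centre. So if `⟨g, x⟩` is nilpotent, it contains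
some `z ≠ 1` commuting with both `g` and `x`. Commuting with `x ≠ 1` puts `z` in `U`, and then
`g` commutes with the nonidentity element `z` of `U`, so `g ∈ U`. Conversely, `U` is abelian, so
`⟨g, x⟩ ≤ U` is abelian, hence nilpotent.
-/

namespace Group

open Subgroup

variable {G : Type*} [Group G]

theorem nontrivial_center_of_isNilpotent [IsNilpotent G] [Nontrivial G] :
    Nontrivial (center G) := by
  by_contra hc
  rw [nontrivial_iff_ne_bot, ne_eq, not_not] at hc
  have hbot : ∀ n, Subgroup.upperCentralSeries G n = ⊥ := by
    intro n
    induction n with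
    | zero => rfl
    | succ n ih =>
      refine eq_bot_iff.mpr fun z hz => ?_
      have hzc : z ∈ center G := mem_center_iff.mpr fun y => by
        have hyz := Subgroup.mem_upperCentralSeries_succ_iff.mp hz y
        rw [ih, mem_bot, commutatorElement_eq_one_iff_commute] at hyz
        exact hyz.symm.eq
      exact hc ▸ hzc
  obtain ⟨n, hn⟩ := IsNilpotent.nilpotent G
  exact bot_ne_top (hbot n ▸ hn)

theorem isNilpotent_of_isMulCommutative [IsMulCommutative G] : IsNilpotent G :=
  ⟨1, upperCentralSeries_one_eq_top_iff.mpr ‹_›⟩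

end Group

namespace Subgroup

variable {G : Type*} [Group G]

theorem exists_ne_one_forall_commute_of_isNilpotent {N : Subgroup G} [Group.IsNilpotent N]
    (hN : N ≠ ⊥) : ∃ z ∈ N, z ≠ 1 ∧ ∀ n ∈ N, Commute z n := by
  have : Nontrivial N := N.nontrivial_iff_ne_bot.mpr hN
  have := Group.nontrivial_center_of_isNilpotent (G := N)
  obtain ⟨z, hz⟩ := exists_ne (1 : center N)
  refine ⟨z, (z : N).prop, fun h => hz (Subtype.ext (Subtype.ext h)), fun n hn => ?_⟩
  exact congrArg Subtype.val (mem_center_iff.mp z.prop ⟨n, hn⟩).symm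

def IsStronglySelfCentralizing (U : Subgroup G) : Prop :=
  ∀ x : G, x ∈ U → x ≠ 1 → centralizer {x} = U

namespace IsStronglySelfCentralizing

variable {U : Subgroup G} (hU : U.IsStronglySelfCentralizing)
include hU

theorem mem_iff_commute {x g : G} (hx : x ∈ U) (hx1 : x ≠ 1) : g ∈ U ↔ Commute g x := by
  rw [← hU x hx hx1, mem_centralizer_singleton_iff]
  rfl

theorem isMulCommutative_of_le {H : Subgroup G} (hHU : H ≤ U) : IsMulCommutative H := by
  refine IsMulCommutative.of_setLike_mul_comm fun a ha b hb => ?_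
  rcases eq_or_ne b 1 with rfl | hb1
  · simp
  · exact ((hU.mem_iff_commute (hHU hb) hb1).mp (hHU ha)).eq

theorem le_of_isNilpotent {N : Subgroup G} [Group.IsNilpotent N] {x : G} (hx : x ∈ U)
    (hx1 : x ≠ 1) (hxN : x ∈ N) : N ≤ U := by
  have hN : N ≠ ⊥ := fun h => hx1 ((mem_bot).mp (h ▸ hxN))
  obtain ⟨z, -, hz1, hzN⟩ := exists_ne_one_forall_commute_of_isNilpotent hN
  have hzU : z ∈ U := (hU.mem_iff_commute hx hx1).mpr (hzN x hxN)
  exact fun n hn => (hU.mem_iff_commute hzU hz1).mpr (hzN n hn).symm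

end IsStronglySelfCentralizing

end Subgroup

theorem nilpotentizerOf_eq_of_stronglySelfCentralizing_general {G : Type*} [Group G]
    (U : Subgroup G)
    (hU : ∀ x : G, x ∈ U → x ≠ 1 → Subgroup.centralizer {x} = U)
    (x : G) (hx : x ∈ U) (hx1 : x ≠ 1) :
    nilpotentizerOf x = (U : Set G) := by
  have hU' : U.IsStronglySelfCentralizing := hU
  ext g
  constructor
  · intro hg
    have : Group.IsNilpotent (Subgroup.closure ({g, x} : Set G)) := hg
    exact hU'.le_of_isNilpotent (N := Subgroup.closure {g, x}) hx hx1
      (Subgroup.subset_closure (by simp)) (Subgroup.subset_closure (by simp))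
  · intro hg
    have hle : Subgroup.closure ({g, x} : Set G) ≤ U :=
      (Subgroup.closure_le U).mpr (Set.pair_subset hg hx)
    have := hU'.isMulCommutative_of_le hle
    exact Group.isNilpotent_of_isMulCommutative

theorem nilpotentizerOf_eq_of_stronglySelfCentralizing {G : Type*} [Group G] [Finite G]
    (U : Subgroup G)
    (hU : ∀ x : G, x ∈ U → x ≠ 1 → Subgroup.centralizer {x} = U)
    (x : G) (hx : x ∈ U) (hx1 : x ≠ 1) :
    nilpotentizerOf x = (U : Set G) :=
  nilpotentizerOf_eq_of_stronglySelfCentralizing_general U hU x hx hx1
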